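/- Let n ≥ 1, let I be a finite index set, and for each i ∈ I let c_i ∈ {0,1}, a_i ∈ ℝⁿ with all coordinates nonnegative, and b_i ∈ ℝ; define H_i(β) = exp(-(⟨a_i, β⟩ + b_i)). Then the negative log-likelihood β ↦ ∑_{i ∈ I} [ c_i · (⟨a_i, β⟩ + b_i) - (1 - c_i) · log(1 - H_i(β)) ] is convex on the convex set {β ∈ ℝⁿ : ⟨a_i, β⟩ + b_i > 0 for all i ∈ I}. -/

import Mathlib

/-!
Write `s = ⟨a, β⟩ + b` for the affine score of an observation. Its summand is
`c * s + (1 - c) * (-log (1 - exp (-s)))`: the first part is linear in `s`, and the second is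
convex on `s > 0` because `log` is increasing and concave while `1 - exp (-s)` is concave.
Since `0 ≤ c ≤ 1`, each summand is a convex function of `s`, hence of `β` after composing
with the affine map `β ↦ s`, and a finite sum of convex functions is convex.
-/

open Real Set

theorem ConvexOn.finset_sum {𝕜 E β ι : Type*} [Semiring 𝕜] [PartialOrder 𝕜] [AddCommMonoid E]
    [AddCommMonoid β] [PartialOrder β] [IsOrderedAddMonoid β] [SMul 𝕜 E] [Module 𝕜 β]
    {s : Set E} (hs : Convex 𝕜 s) (t : Finset ι) {f : ι → E → β}
    (hf : ∀ i ∈ t, ConvexOn 𝕜 s (f i)) : ConvexOn 𝕜 s fun x => ∑ i ∈ t, f i x := by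
  classical
  induction t using Finset.induction_on with
  | empty => simpa only [Finset.sum_empty] using convexOn_const (0 : β) hs
  | insert j t hj ih =>
    simp only [Finset.sum_insert hj]
    exact (hf j (t.mem_insert_self j)).add (ih fun i hi => hf i (Finset.mem_insert_of_mem hi))

theorem ConvexOn.finset_sum_comp_affineMap {E F ι : Type*} [AddCommGroup E] [Module ℝ E]
    [AddCommGroup F] [Module ℝ F] (t : Finset ι) {s : ι → Set F} {f : ι → F → ℝ}
    (g : ι → E →ᵃ[ℝ] F) (hf : ∀ i ∈ t, ConvexOn ℝ (s i) (f i)) :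
    ConvexOn ℝ (⋂ i ∈ t, g i ⁻¹' s i) fun x => ∑ i ∈ t, f i (g i x) := by
  have hconvex : Convex ℝ (⋂ i ∈ t, g i ⁻¹' s i) :=
    convex_iInter₂ fun i hi => (hf i hi).1.affine_preimage (g i)
  exact .finset_sum hconvex t fun i hi =>
    ((hf i hi).comp_affineMap (g i)).subset (biInter_subset_of_mem hi) hconvex

theorem concaveOn_one_sub_exp_neg : ConcaveOn ℝ univ fun x => 1 - exp (-x) :=
  (concaveOn_const 1 convex_univ).sub (convexOn_exp.comp_linearMap (-LinearMap.id))

theorem concaveOn_log_one_sub_exp_neg : ConcaveOn ℝ (Ioi 0) fun x => log (1 - exp (-x)) := by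
  set u : ℝ → ℝ := fun x => 1 - exp (-x)
  have hu_pos : u '' Ioi 0 ⊆ Ioi 0 := by
    rintro _ ⟨x, hx, rfl⟩
    simpa [u] using hx
  have hu_convex : Convex ℝ (u '' Ioi 0) :=
    (isPreconnected_Ioi.image u (by fun_prop)).convex
  exact (strictConcaveOn_log_Ioi.concaveOn.subset hu_pos hu_convex).comp
    (concaveOn_one_sub_exp_neg.subset (subset_univ _) (convex_Ioi 0))
    (strictMonoOn_log.monotoneOn.mono hu_pos)

theorem convexOn_mul_sub_mul_log_one_sub_exp_neg {c : ℝ} (hc₀ : 0 ≤ c) (hc₁ : c ≤ 1) :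
    ConvexOn ℝ (Ioi 0) fun x => c * x - (1 - c) * log (1 - exp (-x)) := by
  refine (((convexOn_id (convex_Ioi 0)).smul hc₀).add
    (concaveOn_log_one_sub_exp_neg.neg.smul (sub_nonneg.2 hc₁))).congr fun x _ => ?_
  simp only [Pi.add_apply, id, smul_eq_mul, Pi.neg_apply]
  ring

theorem interrate_neg_log_likelihood_convex_general (n : ℕ)
    {ι : Type*} (I : Finset ι)
    (c : ι → ℝ) (hc : ∀ i ∈ I, c i = 0 ∨ c i = 1)
    (a : ι → Fin n → ℝ) (b : ι → ℝ)
    (H : ι → (Fin n → ℝ) → ℝ)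
    (hHdef : ∀ i ∈ I, ∀ β : Fin n → ℝ, H i β = Real.exp (-(∑ j, a i j * β j + b i))) :
    Convex ℝ {β : Fin n → ℝ | ∀ i ∈ I, 0 < ∑ j, a i j * β j + b i} ∧
    ConvexOn ℝ {β : Fin n → ℝ | ∀ i ∈ I, 0 < ∑ j, a i j * β j + b i}
      (fun β : Fin n → ℝ =>
        ∑ i ∈ I,
          (c i * (∑ j, a i j * β j + b i) - (1 - c i) * Real.log (1 - H i β))) := by
  let score : ι → (Fin n → ℝ) →ᵃ[ℝ] ℝ := fun i =>
    (dotProductBilin ℝ ℝ (a i)).toAffineMap + AffineMap.const ℝ (Fin n → ℝ) (b i)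
  have hscore : ∀ i β, score i β = ∑ j, a i j * β j + b i := fun _ _ => rfl
  have hdomain : {β : Fin n → ℝ | ∀ i ∈ I, 0 < ∑ j, a i j * β j + b i} =
      ⋂ i ∈ I, score i ⁻¹' Ioi 0 := by
    ext β
    simp [hscore]
  have hterm : ∀ i ∈ I, ConvexOn ℝ (Ioi 0) fun x => c i * x - (1 - c i) * log (1 - exp (-x)) := by
    intro i hi
    obtain ⟨hc₀, hc₁⟩ : 0 ≤ c i ∧ c i ≤ 1 := by rcases hc i hi with h | h <;> simp [h]
    exact convexOn_mul_sub_mul_log_one_sub_exp_neg hc₀ hc₁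
  have hsum := ConvexOn.finset_sum_comp_affineMap I score hterm
  rw [hdomain]
  refine ⟨hsum.1, hsum.congr fun β _ => Finset.sum_congr rfl fun i hi => ?_⟩
  rw [hHdef i hi, hscore]

/-- Proposition 1 of the paper instantiated on the InterRate kernel families:
for log-linear hazard kernels `H i β = exp (-(⟨a i, β⟩ + b i))` with nonnegative
coefficient vectors `a i` and binary contagion indicators `c i ∈ {0, 1}`, the
negative log-likelihood
`β ↦ ∑ i, (c i * (⟨a i, β⟩ + b i) - (1 - c i) * log (1 - H i β))`
is convex on the convex set `{β : ∀ i ∈ I, ⟨a i, β⟩ + b i > 0}`. -/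
theorem interrate_neg_log_likelihood_convex (n : ℕ) (hn : 1 ≤ n)
    {ι : Type*} (I : Finset ι)
    (c : ι → ℝ) (hc : ∀ i ∈ I, c i = 0 ∨ c i = 1)
    (a : ι → Fin n → ℝ) (ha : ∀ i ∈ I, ∀ j, 0 ≤ a i j) (b : ι → ℝ)
    (H : ι → (Fin n → ℝ) → ℝ)
    (hHdef : ∀ i ∈ I, ∀ β : Fin n → ℝ, H i β = Real.exp (-(∑ j, a i j * β j + b i))) :
    Convex ℝ {β : Fin n → ℝ | ∀ i ∈ I, 0 < ∑ j, a i j * β j + b i} ∧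
    ConvexOn ℝ {β : Fin n → ℝ | ∀ i ∈ I, 0 < ∑ j, a i j * β j + b i}
      (fun β : Fin n → ℝ =>
        ∑ i ∈ I,
          (c i * (∑ j, a i j * β j + b i) - (1 - c i) * Real.log (1 - H i β))) :=
  interrate_neg_log_likelihood_convex_general n I c hc a b H hHdef
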